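/- arXiv:1704.05758 — 3 statements merged into one kernel-verified Lean document; each statement's English description precedes it below -/
import Mathlib

section
/- Let A_j be a finite nonempty collection of multisets in R^d, each of cardinality k, where each X ∈ A_j is written X = {x^{(X)}_1, ..., x^{(X)}_k}. Define ρ₂(X,Y) = min_τ Σ_{i=1}^k ‖x_i − y_{τ(i)}‖² for multisets of equal cardinality k. Let permutations {τ*_X}_{X ∈ A_j} minimize Σ_{i=1}^k Σ_{X ∈ A_j} Σ_{X' ∈ A_j} ‖x^{(X)}_{τ_X(i)} − x^{(X')}_{τ_{X'}(i)}‖² over all collections of permutations, and define X*_j = {x*_1, ..., x*_k} with x*_i = (1/|A_j|) Σ_{X ∈ A_j} x^{(X)}_{τ*_X(i)}. Then for every multiset X̃ ⊆ R^d of cardinality k, Σ_{X ∈ A_j} ρ₂(X, X*_j) ≤ Σ_{X ∈ A_j} ρ₂(X, X̃), i.e., X*_j is a center point pattern. -/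
/-!
Let `τ_X` be permutations attaining `ρ₂(X, X̃)`. For each index `i` the points `x^{(X)}_{τ_X(i)}`
form a cloud whose sum of squared distances to `x̃_i` is at least `1/(2|A|)` times its sum of
pairwise squared distances, with equality when `x̃_i` is the mean of the cloud. Summing over
`i`, the pairwise sum is minimised by the optimal permutations `τ*`, whose clouds have the
points of `X*` as means; and `ρ₂(X, X*)` is at most the cost of the assignment given by `τ*_X`.
-/

open scoped BigOperators

/-- The squared optimal-assignment distortion `ρ₂` between two point patterns of
equal cardinality `k`, represented by tuples. -/
noncomputable def rho2 {d k : ℕ} (x y : Fin k → EuclideanSpace ℝ (Fin d)) : ℝ :=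
  ⨅ τ : Equiv.Perm (Fin k), ∑ i, ‖x i - y (τ i)‖ ^ 2

section PairwiseDistances

variable {E : Type*} [NormedAddCommGroup E] [InnerProductSpace ℝ E] {ι : Type*} [Fintype ι]

theorem sum_sum_norm_sub_sq_add_two_mul_norm_sum_sq (b : ι → E) :
    ∑ X, ∑ X', ‖b X - b X'‖ ^ 2 + 2 * ‖∑ X, b X‖ ^ 2
      = 2 * Fintype.card ι * ∑ X, ‖b X‖ ^ 2 := by
  simp_rw [norm_sub_sq_real, Finset.sum_add_distrib, Finset.sum_sub_distrib,
    ← Finset.mul_sum, ← inner_sum, ← sum_inner, real_inner_self_eq_norm_sq, Finset.sum_const,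
    Finset.card_univ, nsmul_eq_mul]
  rw [← Finset.mul_sum]
  ring

theorem sum_sum_norm_sub_sq_le (a : ι → E) (y : E) :
    ∑ X, ∑ X', ‖a X - a X'‖ ^ 2 ≤ 2 * Fintype.card ι * ∑ X, ‖a X - y‖ ^ 2 := by
  have h := sum_sum_norm_sub_sq_add_two_mul_norm_sum_sq fun X => a X - y
  simp only [sub_sub_sub_cancel_right] at h
  nlinarith [norm_nonneg (∑ X, (a X - y))]

theorem sum_sum_norm_sub_sq_eq_of_mean (a : ι → E) :
    ∑ X, ∑ X', ‖a X - a X'‖ ^ 2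
      = 2 * Fintype.card ι * ∑ X, ‖a X - (Fintype.card ι : ℝ)⁻¹ • ∑ X', a X'‖ ^ 2 := by
  set m := (Fintype.card ι : ℝ)⁻¹ • ∑ X', a X'
  have hcentered : ∑ X, (a X - m) = 0 := by
    rcases isEmpty_or_nonempty ι with _ | _
    · simp
    rw [Finset.sum_sub_distrib, Finset.sum_const, Finset.card_univ, ← Nat.cast_smul_eq_nsmul ℝ,
      smul_inv_smul₀ (by positivity), sub_self]
  have h := sum_sum_norm_sub_sq_add_two_mul_norm_sum_sq fun X => a X - m
  simp only [sub_sub_sub_cancel_right, hcentered, norm_zero] at h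
  linarith

end PairwiseDistances

section OptimalAssignment

variable {d k : ℕ} (x y : Fin k → EuclideanSpace ℝ (Fin d))

theorem sum_norm_sub_sq_comp_symm (τ : Equiv.Perm (Fin k)) :
    ∑ i, ‖x i - y (τ.symm i)‖ ^ 2 = ∑ i, ‖x (τ i) - y i‖ ^ 2 := by
  rw [← Equiv.sum_comp τ]
  simp

theorem rho2_le_sum_norm_sub_sq (τ : Equiv.Perm (Fin k)) :
    rho2 x y ≤ ∑ i, ‖x (τ i) - y i‖ ^ 2 := by
  rw [← sum_norm_sub_sq_comp_symm]
  exact ciInf_le (Set.finite_range _).bddBelow τ.symm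

theorem exists_rho2_eq_sum_norm_sub_sq :
    ∃ τ : Equiv.Perm (Fin k), rho2 x y = ∑ i, ‖x (τ i) - y i‖ ^ 2 := by
  obtain ⟨τ, hτ⟩ := exists_eq_ciInf_of_finite (f := fun τ : Equiv.Perm (Fin k) =>
    ∑ i, ‖x i - y (τ i)‖ ^ 2)
  exact ⟨τ.symm, by rw [rho2, ← hτ, ← sum_norm_sub_sq_comp_symm, Equiv.symm_symm]⟩

end OptimalAssignment

theorem center_point_pattern_general (d k : ℕ) (ι : Type*) [Fintype ι]
    (x : ι → Fin k → EuclideanSpace ℝ (Fin d))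
    (τs : ι → Equiv.Perm (Fin k))
    (hτs : ∀ τ : ι → Equiv.Perm (Fin k),
      ∑ i : Fin k, ∑ X : ι, ∑ X' : ι, ‖x X (τs X i) - x X' (τs X' i)‖ ^ 2
        ≤ ∑ i : Fin k, ∑ X : ι, ∑ X' : ι, ‖x X (τ X i) - x X' (τ X' i)‖ ^ 2)
    (xstar : Fin k → EuclideanSpace ℝ (Fin d))
    (hxstar : ∀ i, xstar i = (Fintype.card ι : ℝ)⁻¹ • ∑ X : ι, x X (τs X i)) :
    ∀ xt : Fin k → EuclideanSpace ℝ (Fin d),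
      ∑ X : ι, rho2 (x X) xstar ≤ ∑ X : ι, rho2 (x X) xt := by
  intro xt
  rcases isEmpty_or_nonempty ι with _ | _
  · simp
  choose σ hσ using fun X => exists_rho2_eq_sum_norm_sub_sq (x X) xt
  refine le_of_mul_le_mul_left ?_ (by positivity : (0 : ℝ) < 2 * Fintype.card ι)
  calc 2 * Fintype.card ι * ∑ X, rho2 (x X) xstar
      ≤ 2 * Fintype.card ι * ∑ X, ∑ i, ‖x X (τs X i) - xstar i‖ ^ 2 := by
        gcongr with X
        exact rho2_le_sum_norm_sub_sq _ _ _
    _ = ∑ i, ∑ X, ∑ X', ‖x X (τs X i) - x X' (τs X' i)‖ ^ 2 := by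
        rw [Finset.sum_comm, Finset.mul_sum]
        refine Finset.sum_congr rfl fun i _ => ?_
        rw [hxstar, sum_sum_norm_sub_sq_eq_of_mean]
    _ ≤ ∑ i, ∑ X, ∑ X', ‖x X (σ X i) - x X' (σ X' i)‖ ^ 2 := hτs σ
    _ ≤ ∑ i, 2 * Fintype.card ι * ∑ X, ‖x X (σ X i) - xt i‖ ^ 2 :=
        Finset.sum_le_sum fun i _ => sum_sum_norm_sub_sq_le _ (xt i)
    _ = 2 * Fintype.card ι * ∑ X, rho2 (x X) xt := by
        rw [← Finset.mul_sum, Finset.sum_comm]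
        simp only [hσ]

/-- The point pattern built from the clique means of an optimal collection of
permutations is a center point pattern (Lemma 3 of the paper). -/
theorem center_point_pattern (d k : ℕ) (ι : Type*) [Fintype ι] [Nonempty ι]
    (x : ι → Fin k → EuclideanSpace ℝ (Fin d))
    (τs : ι → Equiv.Perm (Fin k))
    (hτs : ∀ τ : ι → Equiv.Perm (Fin k),
      ∑ i : Fin k, ∑ X : ι, ∑ X' : ι, ‖x X (τs X i) - x X' (τs X' i)‖ ^ 2
        ≤ ∑ i : Fin k, ∑ X : ι, ∑ X' : ι, ‖x X (τ X i) - x X' (τ X' i)‖ ^ 2)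
    (xstar : Fin k → EuclideanSpace ℝ (Fin d))
    (hxstar : ∀ i, xstar i = (Fintype.card ι : ℝ)⁻¹ • ∑ X : ι, x X (τs X i)) :
    ∀ xt : Fin k → EuclideanSpace ℝ (Fin d),
      ∑ X : ι, rho2 (x X) xstar ≤ ∑ X : ι, rho2 (x X) xt :=
  center_point_pattern_general d k ι x τs hτs xstar hxstar
end

section
/- For every λ̄ > 0 and every Ñ ∈ N, the tail sum Σ_{k = Ñ²+1}^{∞} (e^{−λ̄} λ̄^k / k!) log k! is bounded above by (1 − Σ_{k=0}^{Ñ²−2} e^{−λ̄} λ̄^k / k!) · λ̄². -/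
/-!
Since `log k! ≤ k log k ≤ k (k - 1)` and `e^{-λ} λ^k / k! · k (k - 1) = λ² e^{-λ} λ^{k-2} / (k-2)!`,
the `k`-th term of the tail is at most `λ²` times the Poisson weight at `k - 2`. Summing, the tail
from `Ñ² + 1` is at most `λ²` times the Poisson tail from `Ñ² - 1`, which is `1` minus the head of
the Poisson distribution.
-/

open Real Finset Nat

noncomputable def poissonWeight (lam : ℝ) (k : ℕ) : ℝ := exp (-lam) * lam ^ k / k !

lemma poissonWeight_nonneg {lam : ℝ} (hlam : 0 ≤ lam) (k : ℕ) : 0 ≤ poissonWeight lam k := by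
  unfold poissonWeight; positivity

lemma hasSum_poissonWeight {lam : ℝ} (hlam : 0 ≤ lam) : HasSum (poissonWeight lam) 1 :=
  ProbabilityTheory.hasSum_one_poissonMeasure ⟨lam, hlam⟩

lemma poissonWeight_succ_mul (lam : ℝ) (k : ℕ) :
    poissonWeight lam (k + 1) * (k + 1 : ℕ) = lam * poissonWeight lam k := by
  unfold poissonWeight
  rw [factorial_succ]
  push_cast
  field_simp
  ring

lemma Real.log_factorial_le_mul_sub_one (n : ℕ) : log (n ! : ℝ) ≤ n * (n - 1) := by
  rcases n.eq_zero_or_pos with rfl | hn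
  · simp
  calc log (n ! : ℝ) ≤ log ((n : ℝ) ^ n) := by
        gcongr
        exact_mod_cast factorial_le_pow n
    _ = n * log n := log_pow n n
    _ ≤ n * (n - 1) := by gcongr; exact log_le_sub_one_of_pos (by positivity)

lemma poissonWeight_add_two_mul_log_factorial_le {lam : ℝ} (hlam : 0 ≤ lam) (j : ℕ) :
    poissonWeight lam (j + 2) * log ((j + 2) ! : ℝ) ≤ lam ^ 2 * poissonWeight lam j :=
  calc poissonWeight lam (j + 2) * log ((j + 2) ! : ℝ)
      ≤ poissonWeight lam (j + 1 + 1) * ((j + 1 + 1 : ℕ) * (j + 1 : ℕ)) := by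
        gcongr
        · exact poissonWeight_nonneg hlam _
        · exact (log_factorial_le_mul_sub_one (j + 2)).trans_eq (by push_cast; ring)
    _ = lam ^ 2 * poissonWeight lam j := by
        rw [← mul_assoc, poissonWeight_succ_mul, mul_assoc, poissonWeight_succ_mul]; ring

theorem HasSum.ite_le {α : Type*} [AddCommGroup α] [TopologicalSpace α] [IsTopologicalAddGroup α]
    {f : ℕ → α} {a : α} (hf : HasSum f a) (m : ℕ) :
    HasSum (fun k => if m ≤ k then f k else 0) (a - ∑ k ∈ range m, f k) := by
  have hhead : ∑ k ∈ range m, (if m ≤ k then f k else 0) = 0 :=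
    sum_eq_zero fun k hk => if_neg (by simpa using hk)
  refine (hasSum_nat_add_iff' m).1 ?_
  simpa [hhead] using (hasSum_nat_add_iff' m).2 hf

theorem tsum_le_of_shift_le {f g : ℕ → ℝ} {b : ℝ} (k : ℕ) (hf₀ : ∀ i < k, f i = 0)
    (hf : ∀ j, 0 ≤ f (j + k)) (hfg : ∀ j, f (j + k) ≤ g j) (hg : HasSum g b) :
    ∑' i, f i ≤ b := by
  obtain ⟨a, ha⟩ := hg.summable.of_nonneg_of_le hf hfg
  have hhead : ∑ i ∈ range k, f i = 0 := sum_eq_zero fun i hi => hf₀ i (mem_range.1 hi)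
  rw [((hasSum_nat_add_iff' k).1 (by rwa [hhead, sub_zero])).tsum_eq]
  exact hasSum_le hfg ha hg

theorem tsum_ite_le_mul_log_factorial_le {lam : ℝ} (hlam : 0 ≤ lam) (n : ℕ) :
    (∑' k : ℕ, if n ≤ k then poissonWeight lam k * log (k ! : ℝ) else 0)
      ≤ (1 - ∑ k ∈ range (n - 2), poissonWeight lam k) * lam ^ 2 := by
  rw [mul_comm]
  refine tsum_le_of_shift_le 2 (fun i hi => ?_) (fun j => ?_) (fun j => ?_)
    (((hasSum_poissonWeight hlam).ite_le (n - 2)).mul_left (lam ^ 2))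
  · interval_cases i <;> simp
  · split_ifs
    · exact mul_nonneg (poissonWeight_nonneg hlam _) (log_nonneg (mod_cast (j + 2).factorial_pos))
    · exact le_rfl
  · split_ifs with h h'
    · exact poissonWeight_add_two_mul_log_factorial_le hlam j
    · omega
    · exact mul_nonneg (sq_nonneg lam) (poissonWeight_nonneg hlam j)
    · simp

theorem poisson_tail_log_factorial_bound_general (lam : ℝ) (hlam : 0 < lam) (Nt : ℕ) :
    (∑' k : ℕ, if Nt ^ 2 + 1 ≤ k then
        Real.exp (-lam) * lam ^ k / (Nat.factorial k : ℝ) * Real.log (Nat.factorial k : ℝ)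
      else 0)
      ≤ (1 - ∑ k ∈ Finset.range (Nt ^ 2 - 1),
            Real.exp (-lam) * lam ^ k / (Nat.factorial k : ℝ)) * lam ^ 2 := by
  have h := tsum_ite_le_mul_log_factorial_le hlam.le (Nt ^ 2 + 1)
  rwa [show Nt ^ 2 + 1 - 2 = Nt ^ 2 - 1 by omega] at h

/-- Bound on the Poisson tail sum involving `log k!` (eq. (106) of the paper). -/
theorem poisson_tail_log_factorial_bound (lam : ℝ) (hlam : 0 < lam) (Nt : ℕ) (hNt : 1 ≤ Nt) :
    (∑' k : ℕ, if Nt ^ 2 + 1 ≤ k then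
        Real.exp (-lam) * lam ^ k / (Nat.factorial k : ℝ) * Real.log (Nat.factorial k : ℝ)
      else 0)
      ≤ (1 - ∑ k ∈ Finset.range (Nt ^ 2 - 1),
            Real.exp (-lam) * lam ^ k / (Nat.factorial k : ℝ)) * lam ^ 2 :=
  poisson_tail_log_factorial_bound_general lam hlam Nt
end

section
/- Let A ⊆ R^d be a Borel set with finite Lebesgue measure, let s > 0, c > 0, and let y_1,...,y_ℓ ∈ R^d (ℓ ≥ 1). Define U_c = {x ∈ R^d : ‖x‖ ≤ c}. Then ∫_A exp(−s · min_{j=1}^{ℓ} min{‖x − y_j‖², c²}) dx ≤ e^{−sc²} L^d(A) + ℓ (−e^{−sc²} L^d(U_c) + ∫_{U_c} e^{−s‖x‖²} dx), where L^d denotes d-dimensional Lebesgue measure. -/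
open MeasureTheory Metric

/-!
The bump `φ = truncGaussBump s c` is nonnegative and vanishes outside `U_c`, and the integrand
equals `exp(-sc²) + max_j φ(x - y_j) ≤ exp(-sc²) + ∑_j φ(x - y_j)`. Integrating over `A`, each
translate contributes at most `∫ φ = ∫_{U_c} e^{-s‖x‖²} dx - exp(-sc²) L^d(U_c)`.
-/

noncomputable def truncGaussBump {E : Type*} [NormedAddCommGroup E] (s c : ℝ) (z : E) : ℝ :=
  Real.exp (-(s * min (‖z‖ ^ 2) (c ^ 2))) - Real.exp (-(s * c ^ 2))

section truncGaussBump

variable {E : Type*} [NormedAddCommGroup E] {s c : ℝ}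

theorem continuous_truncGaussBump : Continuous (truncGaussBump (E := E) s c) := by
  unfold truncGaussBump
  fun_prop

theorem truncGaussBump_nonneg (hs : 0 ≤ s) (z : E) : 0 ≤ truncGaussBump s c z := by
  rw [truncGaussBump, sub_nonneg]
  gcongr
  exact min_le_right _ _

theorem truncGaussBump_eq_zero (hc : 0 ≤ c) {z : E} (hz : z ∉ closedBall 0 c) :
    truncGaussBump s c z = 0 := by
  have hcz : c ≤ ‖z‖ := (not_le.mp (by simpa using hz)).le
  rw [truncGaussBump, min_eq_right (pow_le_pow_left₀ hc hcz 2), sub_self]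

theorem truncGaussBump_of_mem {z : E} (hz : z ∈ closedBall 0 c) :
    truncGaussBump s c z = Real.exp (-(s * ‖z‖ ^ 2)) - Real.exp (-(s * c ^ 2)) := by
  have hzc : ‖z‖ ≤ c := by simpa using hz
  rw [truncGaussBump, min_eq_left (pow_le_pow_left₀ (norm_nonneg z) hzc 2)]

theorem exp_neg_mul_iInf_le_sum_truncGaussBump {ι : Type*} [Fintype ι] [Nonempty ι]
    (hs : 0 ≤ s) (y : ι → E) (x : E) :
    Real.exp (-(s * ⨅ j, min (‖x - y j‖ ^ 2) (c ^ 2)))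
      ≤ Real.exp (-(s * c ^ 2)) + ∑ j, truncGaussBump s c (x - y j) := by
  obtain ⟨j₀, hj₀⟩ := Finite.exists_min fun j => min (‖x - y j‖ ^ 2) (c ^ 2)
  have hinf : ⨅ j, min (‖x - y j‖ ^ 2) (c ^ 2) = min (‖x - y j₀‖ ^ 2) (c ^ 2) :=
    le_antisymm (ciInf_le (Finite.bddBelow_range _) j₀) (le_ciInf hj₀)
  calc Real.exp (-(s * ⨅ j, min (‖x - y j‖ ^ 2) (c ^ 2)))
      = Real.exp (-(s * c ^ 2)) + truncGaussBump s c (x - y j₀) := by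
        rw [hinf, truncGaussBump, add_sub_cancel]
    _ ≤ Real.exp (-(s * c ^ 2)) + ∑ j, truncGaussBump s c (x - y j) := by
        gcongr
        exact Finset.single_le_sum (f := fun j => truncGaussBump s c (x - y j))
          (fun j _ => truncGaussBump_nonneg hs _) (Finset.mem_univ j₀)

variable [MeasurableSpace E] [BorelSpace E] [ProperSpace E] {μ : Measure E}
  [IsFiniteMeasureOnCompacts μ]

theorem integrable_truncGaussBump (hc : 0 ≤ c) :
    Integrable (truncGaussBump s c) μ :=
  continuous_truncGaussBump.integrable_of_hasCompactSupport <|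
    HasCompactSupport.intro (isCompact_closedBall 0 c) fun _ => truncGaussBump_eq_zero hc

theorem integral_truncGaussBump (hc : 0 ≤ c) :
    ∫ z, truncGaussBump s c z ∂μ
      = ∫ z in closedBall 0 c, Real.exp (-(s * ‖z‖ ^ 2)) ∂μ
        - Real.exp (-(s * c ^ 2)) * (μ (closedBall 0 c)).toReal := by
  rw [← setIntegral_eq_integral_of_forall_compl_eq_zero fun _ => truncGaussBump_eq_zero hc,
    setIntegral_congr_fun measurableSet_closedBall fun _ => truncGaussBump_of_mem,
    integral_sub (ContinuousOn.integrableOn_compact (isCompact_closedBall 0 c) (by fun_prop))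
      (integrableOn_const (C := Real.exp (-(s * c ^ 2))) (isCompact_closedBall 0 c).measure_ne_top),
    setIntegral_const, smul_eq_mul, mul_comm, Measure.real]

theorem setIntegral_truncGaussBump_comp_sub_le [MeasurableAdd E] [μ.IsAddRightInvariant]
    (hs : 0 ≤ s) (hc : 0 ≤ c) (A : Set E) (y : E) :
    ∫ x in A, truncGaussBump s c (x - y) ∂μ ≤ ∫ z, truncGaussBump s c z ∂μ :=
  calc ∫ x in A, truncGaussBump s c (x - y) ∂μ ≤ ∫ x, truncGaussBump s c (x - y) ∂μ :=
        setIntegral_le_integral ((integrable_truncGaussBump hc).comp_sub_right y)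
          (Filter.Eventually.of_forall fun _ => truncGaussBump_nonneg hs _)
    _ = ∫ z, truncGaussBump s c z ∂μ := integral_sub_right_eq_self _ y

end truncGaussBump

theorem integral_exp_min_bound_general (d ℓ : ℕ) (hℓ : 0 < ℓ)
    (A : Set (EuclideanSpace ℝ (Fin d))) (hAfin : volume A < ⊤)
    (s c : ℝ) (hs : 0 < s) (hc : 0 < c)
    (y : Fin ℓ → EuclideanSpace ℝ (Fin d)) :
    (∫ x in A, Real.exp (-(s * ⨅ j : Fin ℓ, min (‖x - y j‖ ^ 2) (c ^ 2))))
      ≤ Real.exp (-(s * c ^ 2)) * (volume A).toReal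
        + (ℓ : ℝ) * (-(Real.exp (-(s * c ^ 2))
              * (volume (Metric.closedBall (0 : EuclideanSpace ℝ (Fin d)) c)).toReal)
            + ∫ x in Metric.closedBall (0 : EuclideanSpace ℝ (Fin d)) c,
                Real.exp (-(s * ‖x‖ ^ 2))) := by
  have : Nonempty (Fin ℓ) := ⟨⟨0, hℓ⟩⟩
  have hconst : Integrable (fun _ => Real.exp (-(s * c ^ 2))) (volume.restrict A) :=
    integrableOn_const hAfin.ne
  have hbump : ∀ j ∈ Finset.univ, IntegrableOn (fun x => truncGaussBump s c (x - y j)) A :=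
    fun j _ => ((integrable_truncGaussBump hc.le).comp_sub_right (y j)).integrableOn
  calc (∫ x in A, Real.exp (-(s * ⨅ j : Fin ℓ, min (‖x - y j‖ ^ 2) (c ^ 2))))
      ≤ ∫ x in A, (Real.exp (-(s * c ^ 2)) + ∑ j, truncGaussBump s c (x - y j)) :=
        integral_mono_of_nonneg (Filter.Eventually.of_forall fun _ => (Real.exp_pos _).le)
          (hconst.add (integrable_finsetSum _ hbump))
          (Filter.Eventually.of_forall (exp_neg_mul_iInf_le_sum_truncGaussBump hs.le y))
    _ = Real.exp (-(s * c ^ 2)) * (volume A).toReal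
          + ∑ j, ∫ x in A, truncGaussBump s c (x - y j) := by
        rw [integral_add hconst (integrable_finsetSum _ hbump),
          setIntegral_const, integral_finsetSum _ hbump, smul_eq_mul, mul_comm, Measure.real]
    _ ≤ Real.exp (-(s * c ^ 2)) * (volume A).toReal
          + ∑ _j : Fin ℓ, ∫ z, truncGaussBump s c z := by
        gcongr with j
        exact setIntegral_truncGaussBump_comp_sub_le hs.le hc.le A (y j)
    _ = _ := by
        rw [Finset.sum_const, Finset.card_univ, Fintype.card_fin, nsmul_eq_mul,
          integral_truncGaussBump hc.le]
        ring

/-- The integral bound of Lemma 6 (Appendix G) of the paper. -/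
theorem integral_exp_min_bound (d ℓ : ℕ) (hℓ : 0 < ℓ)
    (A : Set (EuclideanSpace ℝ (Fin d))) (hA : MeasurableSet A) (hAfin : volume A < ⊤)
    (s c : ℝ) (hs : 0 < s) (hc : 0 < c)
    (y : Fin ℓ → EuclideanSpace ℝ (Fin d)) :
    (∫ x in A, Real.exp (-(s * ⨅ j : Fin ℓ, min (‖x - y j‖ ^ 2) (c ^ 2))))
      ≤ Real.exp (-(s * c ^ 2)) * (volume A).toReal
        + (ℓ : ℝ) * (-(Real.exp (-(s * c ^ 2))
              * (volume (Metric.closedBall (0 : EuclideanSpace ℝ (Fin d)) c)).toReal)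
            + ∫ x in Metric.closedBall (0 : EuclideanSpace ℝ (Fin d)) c,
                Real.exp (-(s * ‖x‖ ^ 2))) :=
  integral_exp_min_bound_general d ℓ hℓ A hAfin s c hs hc y
end
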